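/- Let α be a Wang bar of length n over a color alphabet, given by north word α_N and south word α_S, both of length n, and with equal east and west colors. Suppose there exists p with 0 < p < n such that α_S = u·v with |u| = n−p, |v| = p, and α_N = v·u. Then the biinfinite row obtained by repeating α tiles the plane periodically: stacking copies of this row, each shifted horizontally by p relative to the one below, yields a valid periodic tiling of the plane by the single bar α. -/

import Mathlib

structure WangBar (V C : Type) where
  e : V
  w : V
  n : List C
  s : List C
deriving DecidableEq

/-- A tiling of the plane by a barset `B`: `f` gives the bar covering each cell,
`g` gives the (1-based) position of the cell inside its bar. -/
def IsBarTiling {V C : Type} (B : Set (WangBar V C)) (f : ℤ → ℤ → WangBar V C)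
    (g : ℤ → ℤ → ℕ) : Prop :=
  (∀ i j, f i j ∈ B) ∧
  (∀ i j, 0 < g i j ∧ g i j ≤ (f i j).n.length) ∧
  (∀ i j, g i j < (f i j).n.length → g (i+1) j = g i j + 1 ∧ f (i+1) j = f i j) ∧
  (∀ i j, g i j = (f i j).n.length → g (i+1) j = 1 ∧ (f i j).e = (f (i+1) j).w) ∧
  (∀ i j, (f i j).n[g i j - 1]? = (f i (j+1)).s[g i (j+1) - 1]?)


/-! Shear the constant tiling by `p` per row: cell `(i, j)` sits at position `(i - p j) mod n`
of its bar, and the cell above it at position `(i - p j) - p`. Rotating `α_S = u ++ v` left by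
`|u| = n - p`, i.e. right by `p`, gives `α_N = v ++ u`, which is exactly the vertical matching
condition. -/

theorem ZMod.val_add_one_eq_mod {n : ℕ} [NeZero n] (x : ZMod n) :
    (x + 1).val = (x.val + 1) % n := by
  rw [ZMod.val_add, ZMod.val_one_eq_one_mod, Nat.add_mod_mod]

theorem List.getElem?_append_swap {α : Type*} {n : ℕ} [NeZero n] {u v : List α}
    (huv : u.length + v.length = n) (x : ZMod n) :
    (v ++ u)[x.val]? = (u ++ v)[(x - v.length).val]? := by
  have hx : x - v.length = x + u.length := by
    rw [sub_eq_add_neg, neg_eq_of_add_eq_zero_left]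
    rw [← Nat.cast_add, huv, ZMod.natCast_self]
  rw [← List.rotate_append_length_eq, List.getElem?_rotate (by simp [huv, x.val_lt]), hx,
    ZMod.val_add, ZMod.val_natCast, Nat.add_mod_mod, List.length_append, huv]

theorem isBarTiling_const_sheared {V C : Type} {α : WangBar V C} {n : ℕ} [NeZero n] (p : ℤ)
    (hew : α.e = α.w) (hn : α.n.length = n)
    (hvert : ∀ x : ZMod n, α.n[x.val]? = α.s[(x - p).val]?) :
    IsBarTiling {α} (fun _ _ => α) (fun i j => ((i - p * j : ℤ) : ZMod n).val + 1) := by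
  have hstep (i j : ℤ) :
      ((i + 1 - p * j : ℤ) : ZMod n).val = (((i - p * j : ℤ) : ZMod n).val + 1) % n := by
    rw [← ZMod.val_add_one_eq_mod]
    push_cast
    ring_nf
  refine ⟨fun _ _ => rfl, fun i j => ?_, fun i j h => ?_, fun i j h => ?_, fun i j => ?_⟩
  · have := ZMod.val_lt ((i - p * j : ℤ) : ZMod n)
    dsimp only
    omega
  · dsimp only at h ⊢
    rw [hn] at h
    exact ⟨by rw [hstep, Nat.mod_eq_of_lt h], rfl⟩
  · dsimp only at h ⊢
    rw [hn] at h
    exact ⟨by rw [hstep, h, Nat.mod_self], hew⟩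
  · have hrow : ((i - p * (j + 1) : ℤ) : ZMod n) = ((i - p * j : ℤ) : ZMod n) - p := by
      push_cast
      ring
    simpa only [Nat.add_sub_cancel, hrow] using hvert _

theorem stmt6_general {V C : Type} (α : WangBar V C) (n p : ℕ)
    (hew : α.e = α.w)
    (hn : α.n.length = n)
    (u v : List C) (hu : u.length = n - p) (hv : v.length = p)
    (hS : α.s = u ++ v) (hN : α.n = v ++ u)
    (hpn : p < n) :
    ∃ f g, IsBarTiling ({α} : Set (WangBar V C)) f g ∧
      (∀ i j : ℤ, g (i + (n : ℤ)) j = g i j) ∧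
      (∀ i j : ℤ, g (i + (p : ℤ)) (j + 1) = g i j) := by
  have : NeZero n := ⟨by omega⟩
  refine ⟨_, _, isBarTiling_const_sheared p hew hn fun x => ?_, fun i j => ?_, fun i j => ?_⟩
  · rw [hN, hS, List.getElem?_append_swap (by omega), hv, Int.cast_natCast]
  · push_cast
    rw [ZMod.natCast_self, add_zero]
  · push_cast
    ring_nf

theorem stmt6 {V C : Type} (α : WangBar V C) (n p : ℕ)
    (hew : α.e = α.w)
    (hn : α.n.length = n) (hs : α.s.length = n)
    (u v : List C) (hu : u.length = n - p) (hv : v.length = p)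
    (hS : α.s = u ++ v) (hN : α.n = v ++ u)
    (hp0 : 0 < p) (hpn : p < n) :
    ∃ f g, IsBarTiling ({α} : Set (WangBar V C)) f g ∧
      (∀ i j : ℤ, g (i + (n : ℤ)) j = g i j) ∧
      (∀ i j : ℤ, g (i + (p : ℤ)) (j + 1) = g i j) :=
  stmt6_general α n p hew hn u v hu hv hS hN hpn
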